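/- Let $n = \binom{d+k}{d} - 1$ for positive integers $d, k$. Then the minimal sum of degrees of $n$ distinct nonconstant monomials in $d$ variables equals $Q = \frac{kd}{d+1}\binom{d+k}{d}$, achieved by taking all nonconstant monomials of degree at most $k$. -/

import Mathlib

/-! With `deg α = ∑ l, α l`, layer counting gives
`∑ α ∈ T, min (deg α) k = ∑ j < k, (#T - #{α ∈ T | deg α ≤ j})`.
A set `T` of nonzero exponents has at most `C(d + j, d) - 1` elements of degree `≤ j`, with equality
for all `j ≤ k` when `T` is the set of all nonzero exponents of degree `≤ k`; so this set minimises
the truncated, hence also the untruncated, degree sum. Its value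
`∑ j < k, (C(d + k, d) - C(d + j, d)) = k C(d + k, d) - C(d + k, d + 1)` is evaluated by the
hockey-stick identity and `(d + 1) C(d + k, d + 1) = k C(d + k, d)`. -/

open Finset

namespace Finset

variable {ι : Type*} [Fintype ι] [DecidableEq ι]

theorem card_piAntidiag_univ (i : ℕ) :
    #(piAntidiag (univ : Finset ι) i) = (Fintype.card ι).multichoose i := by
  rw [← map_sym_eq_piAntidiag, card_map, sym_univ, card_univ, Sym.card_sym_eq_multichoose]

end Finset

section
variable (ι : Type*) [Fintype ι] [DecidableEq ι]

def tuplesSumLE (j : ℕ) : Finset (ι → ℕ) :=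
  (range (j + 1)).biUnion fun i => piAntidiag univ i

variable {ι}

@[simp]
theorem mem_tuplesSumLE {j : ℕ} {α : ι → ℕ} : α ∈ tuplesSumLE ι j ↔ ∑ l, α l ≤ j := by
  simp [tuplesSumLE]

theorem card_tuplesSumLE (j : ℕ) :
    #(tuplesSumLE ι j) = (Fintype.card ι + j).choose (Fintype.card ι) := by
  rw [tuplesSumLE, card_biUnion]
  · simp_rw [card_piAntidiag_univ]
    rw [Nat.sum_range_multichoose, add_comm]
  · intro i _ i' _ hii'
    exact disjoint_left.2 fun α hi hi' =>
      hii' ((mem_piAntidiag.1 hi).1.symm.trans (mem_piAntidiag.1 hi').1)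

end

theorem sum_min_eq_sum_range_card_sub {α : Type*} (T : Finset α) (w : α → ℕ) (k : ℕ) :
    ∑ a ∈ T, min (w a) k = ∑ j ∈ range k, (#T - #{a ∈ T | w a ≤ j}) := by
  have hmin : ∀ a, min (w a) k = ∑ j ∈ range k, if j < w a then 1 else 0 := fun a => by
    rw [sum_boole, Nat.cast_id, ← card_range (min (w a) k)]
    congr 1
    ext j
    simp only [mem_range, lt_inf_iff, mem_filter]
    omega
  simp_rw [hmin]
  rw [sum_comm]
  refine sum_congr rfl fun j _ => ?_
  rw [sum_boole, Nat.cast_id, ← card_filter_add_card_filter_not (s := T) (fun a => w a ≤ j)]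
  simp [not_le]

theorem sum_range_add_choose_left (d k : ℕ) :
    ∑ j ∈ range k, (d + j).choose d = (d + k).choose (d + 1) := by
  induction k with
  | zero => simp
  | succ k ih => rw [sum_range_succ, ih, ← add_assoc, Nat.choose_succ_succ', add_comm]

theorem succ_mul_sum_range_choose_sub (d k : ℕ) :
    (d + 1) * ∑ j ∈ range k, ((d + k).choose d - (d + j).choose d) = k * d * (d + k).choose d := by
  have hle : ∀ j ∈ range k, (d + j).choose d ≤ (d + k).choose d := fun j hj =>
    Nat.choose_le_choose d (by simpa using (mem_range.1 hj).le)
  have hrec : (d + k).choose (d + 1) * (d + 1) = (d + k).choose d * k := by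
    rw [Nat.choose_succ_right_eq, Nat.add_sub_cancel_left]
  rw [sum_tsub_distrib _ hle, sum_const, card_range, smul_eq_mul, sum_range_add_choose_left,
    Nat.mul_sub, mul_comm (d + 1) ((d + k).choose (d + 1)), hrec,
    show (d + 1) * (k * (d + k).choose d) = k * d * (d + k).choose d + (d + k).choose d * k by ring,
    Nat.add_sub_cancel]

section
variable {ι : Type*} [Fintype ι] [DecidableEq ι]

theorem sum_tuplesSumLE_eq_sum_range_card_sub (k : ℕ) :
    ∑ α ∈ tuplesSumLE ι k, ∑ l, α l =
      ∑ j ∈ range k, (#(tuplesSumLE ι k) - #(tuplesSumLE ι j)) := by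
  calc ∑ α ∈ tuplesSumLE ι k, ∑ l, α l = ∑ α ∈ tuplesSumLE ι k, min (∑ l, α l) k :=
        sum_congr rfl fun α hα => (min_eq_left (mem_tuplesSumLE.1 hα)).symm
    _ = _ := by
        rw [sum_min_eq_sum_range_card_sub]
        refine sum_congr rfl fun j hj => ?_
        congr 2
        ext α
        simp only [mem_filter, mem_tuplesSumLE]
        exact ⟨And.right, fun h => ⟨h.trans (mem_range.1 hj).le, h⟩⟩

theorem succ_mul_sum_tuplesSumLE (k : ℕ) :
    (Fintype.card ι + 1) * ∑ α ∈ tuplesSumLE ι k, ∑ l, α l =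
      k * Fintype.card ι * (Fintype.card ι + k).choose (Fintype.card ι) := by
  simp_rw [sum_tuplesSumLE_eq_sum_range_card_sub, card_tuplesSumLE]
  exact succ_mul_sum_range_choose_sub _ _

theorem sum_erase_zero_tuplesSumLE_le (k : ℕ) {T : Finset (ι → ℕ)} (hT : ∀ α ∈ T, α ≠ 0)
    (hcard : #T = #((tuplesSumLE ι k).erase 0)) :
    ∑ α ∈ (tuplesSumLE ι k).erase 0, ∑ l, α l ≤ ∑ α ∈ T, ∑ l, α l := by
  set T₀ := (tuplesSumLE ι k).erase 0
  have hlow : ∀ j < k, #{α ∈ T | ∑ l, α l ≤ j} ≤ #{α ∈ T₀ | ∑ l, α l ≤ j} := fun j hj =>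
    card_le_card fun α hα => by
      simp only [mem_filter, T₀, mem_erase, mem_tuplesSumLE] at hα ⊢
      exact ⟨⟨hT α hα.1, by omega⟩, hα.2⟩
  calc ∑ α ∈ T₀, ∑ l, α l = ∑ α ∈ T₀, min (∑ l, α l) k :=
        sum_congr rfl fun α hα => (min_eq_left (mem_tuplesSumLE.1 (mem_of_mem_erase hα))).symm
    _ = ∑ j ∈ range k, (#T₀ - #{α ∈ T₀ | ∑ l, α l ≤ j}) := sum_min_eq_sum_range_card_sub _ _ _
    _ ≤ ∑ j ∈ range k, (#T - #{α ∈ T | ∑ l, α l ≤ j}) := sum_le_sum fun j hj =>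
        hcard ▸ Nat.sub_le_sub_left (hlow j (mem_range.1 hj)) _
    _ = ∑ α ∈ T, min (∑ l, α l) k := (sum_min_eq_sum_range_card_sub _ _ _).symm
    _ ≤ ∑ α ∈ T, ∑ l, α l := sum_le_sum fun _ _ => min_le_left _ _

end

theorem stmt15_general (d k n : ℕ) (hn : n = (d + k).choose d - 1) :
    ∃ Q : ℕ,
      IsLeast
        {s : ℕ | ∃ T : Finset (Fin d → ℕ), T.card = n ∧ (∀ α ∈ T, α ≠ 0) ∧
          s = ∑ α ∈ T, ∑ l, α l} Q ∧
      (d + 1) * Q = k * d * (d + k).choose d ∧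
      ∃ T : Finset (Fin d → ℕ),
        (∀ α : Fin d → ℕ, α ∈ T ↔ (α ≠ 0 ∧ ∑ l, α l ≤ k)) ∧
        T.card = n ∧ (∑ α ∈ T, ∑ l, α l) = Q := by
  set T₀ := (tuplesSumLE (Fin d) k).erase 0
  have hmem : ∀ α, α ∈ T₀ ↔ α ≠ 0 ∧ ∑ l, α l ≤ k := fun α => by
    rw [mem_erase, mem_tuplesSumLE]
  have hcard : #T₀ = n := by
    rw [card_erase_of_mem (by simp), card_tuplesSumLE, Fintype.card_fin, hn]
  have hsum : ∑ α ∈ T₀, ∑ l, α l = ∑ α ∈ tuplesSumLE (Fin d) k, ∑ l, α l :=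
    sum_erase _ (by simp)
  refine ⟨∑ α ∈ T₀, ∑ l, α l, ⟨⟨T₀, hcard, fun α hα => ((hmem α).1 hα).1, rfl⟩, ?_⟩, ?_,
    T₀, hmem, hcard, rfl⟩
  · rintro _ ⟨T, hT, hT0, rfl⟩
    exact sum_erase_zero_tuplesSumLE_le k hT0 (hT.trans hcard.symm)
  · simpa [hsum] using succ_mul_sum_tuplesSumLE (ι := Fin d) k

theorem stmt15 (d k n : ℕ) (hd : 0 < d) (hk : 0 < k) (hn : n = (d + k).choose d - 1) :
    ∃ Q : ℕ,
      IsLeast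
        {s : ℕ | ∃ T : Finset (Fin d → ℕ), T.card = n ∧ (∀ α ∈ T, α ≠ 0) ∧
          s = ∑ α ∈ T, ∑ l, α l} Q ∧
      (d + 1) * Q = k * d * (d + k).choose d ∧
      ∃ T : Finset (Fin d → ℕ),
        (∀ α : Fin d → ℕ, α ∈ T ↔ (α ≠ 0 ∧ ∑ l, α l ≤ k)) ∧
        T.card = n ∧ (∑ α ∈ T, ∑ l, α l) = Q :=
  stmt15_general d k n hn
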